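/- arXiv:2507.10289 — 6 statements merged into one kernel-verified Lean document; each statement's English description precedes it below -/
import Mathlib

section
/- Let L : F^d → F^d be a linear bijection that is either a Euclidean similarity or a Poincaré similarity. Then the following are equivalent: (i) L[S₀] ⊆ S₀; (ii) L[S₀] = S₀; (iii) L[T] ⊆ T; (iv) L[T] = T. -/
/-!
Both products are diagonal bilinear forms `B` with nonzero diagonal entries (`1, …, 1` and
`1, -1, …, -1`), and for such a form the coordinate subspaces `S₀ = {p₀ = 0}` and
`T = {pᵢ = 0 for i ≠ 0}` are each other's `B`-orthogonal complements. A linear similarity `L`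
scales `B` by a factor that is nonzero because `L` is onto, so it carries orthogonal complements
to orthogonal complements: `L (W^⊥) = (L W)^⊥`. Hence `L S₀ = S₀` iff `L T = T`, and `L W ⊆ W`
already forces `L W = W` because `L` preserves dimension.
-/

namespace Spacetimes

open Finset

variable {F : Type*} [Field F] [LinearOrder F] [IsStrictOrderedRing F] {d : ℕ}

/-- The Euclidean scalar product on `Fin d → F`. -/
def euclProd (p q : Fin d → F) : F := ∑ i, p i * q i

/-- The Minkowski product on `Fin d → F`; index `0` is the time coordinate. -/
def minkProd [NeZero d] (p q : Fin d → F) : F :=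
  p 0 * q 0 - ∑ i ∈ Finset.univ.erase (0 : Fin d), p i * q i

/-- The squared distance function associated to a product `B`. -/
def sqDist (B : (Fin d → F) → (Fin d → F) → F) (p q : Fin d → F) : F :=
  B (p - q) (p - q)

/-- An affine transformation: a linear bijection composed with a translation. -/
def IsAffine (A : (Fin d → F) → (Fin d → F)) : Prop :=
  ∃ (L : (Fin d → F) ≃ₗ[F] (Fin d → F)) (t : Fin d → F), ∀ p, A p = L p + t

/-- A Euclidean similarity: an affine transformation scaling squared
Euclidean distances by a constant factor. -/
def EuclSim (A : (Fin d → F) → (Fin d → F)) : Prop :=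
  IsAffine A ∧ ∃ a : F, ∀ p q : Fin d → F,
    sqDist euclProd (A p) (A q) = a * sqDist euclProd p q

/-- A Poincaré similarity: an affine transformation scaling squared
Minkowski distances by a constant factor. -/
def PoiSim [NeZero d] (A : (Fin d → F) → (Fin d → F)) : Prop :=
  IsAffine A ∧ ∃ a : F, ∀ p q : Fin d → F,
    sqDist minkProd (A p) (A q) = a * sqDist minkProd p q

/-- A Galilean similarity. -/
def GalSim [NeZero d] (A : (Fin d → F) → (Fin d → F)) : Prop :=
  IsAffine A ∧ ∃ a : F, ∀ p q : Fin d → F, p 0 = q 0 →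
    A p 0 = A q 0 ∧ sqDist euclProd (A p) (A q) = a * sqDist euclProd p q

/-- A map respects a binary relation. -/
def Respects2 {α : Type*} (f : α → α) (R : α → α → Prop) : Prop :=
  ∀ p q, R p q ↔ R (f p) (f q)

/-- A map respects a ternary relation. -/
def Respects3 {α : Type*} (f : α → α) (R : α → α → α → Prop) : Prop :=
  ∀ p q r, R p q r ↔ R (f p) (f q) (f r)

/-- A map respects a 4-ary relation. -/
def Respects4 {α : Type*} (f : α → α) (R : α → α → α → α → Prop) : Prop :=
  ∀ p q r s, R p q r s ↔ R (f p) (f q) (f r) (f s)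

/-- Absolute simultaneity. -/
def SimRel [NeZero d] (p q : Fin d → F) : Prop := p 0 = q 0

/-- Being at rest (same spatial components). -/
def RestRel [NeZero d] (p q : Fin d → F) : Prop := ∀ i, i ≠ 0 → p i = q i

/-- A trivial Euclidean similarity: a Euclidean similarity respecting `RestRel`. -/
def TrivEuclSim [NeZero d] (A : (Fin d → F) → (Fin d → F)) : Prop :=
  EuclSim A ∧ Respects2 A RestRel

/-- A trivial Galilean similarity: a Galilean similarity respecting `RestRel`. -/
def TrivGalSim [NeZero d] (A : (Fin d → F) → (Fin d → F)) : Prop :=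
  GalSim A ∧ Respects2 A RestRel

/-- Betweenness. -/
def Bw (p q r : Fin d → F) : Prop :=
  ∃ l : F, 0 ≤ l ∧ l ≤ 1 ∧ q = p + l • (r - p)

/-- Lightlike relatedness. -/
def Light [NeZero d] (p q : Fin d → F) : Prop :=
  (p 0 - q 0) ^ 2 = ∑ i ∈ Finset.univ.erase (0 : Fin d), (p i - q i) ^ 2

/-- Euclidean congruence of segments. -/
def CongE (p q r s : Fin d → F) : Prop :=
  sqDist euclProd p q = sqDist euclProd r s

/-- Minkowski congruence of segments. -/
def CongM [NeZero d] (p q r s : Fin d → F) : Prop :=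
  sqDist minkProd p q = sqDist minkProd r s

/-- Congruence on simultaneity. -/
def CongS [NeZero d] (p q r s : Fin d → F) : Prop :=
  CongE p q r s ∧ SimRel p q ∧ SimRel r s

/-- The time axis. -/
def timeAxis (F : Type*) [Field F] [LinearOrder F] [IsStrictOrderedRing F] (d : ℕ) [NeZero d] :
    Set (Fin d → F) := {p | ∀ i, i ≠ 0 → p i = 0}

/-- The simultaneity at the origin. -/
def simul0 (F : Type*) [Field F] [LinearOrder F] [IsStrictOrderedRing F] (d : ℕ) [NeZero d] :
    Set (Fin d → F) := {p | p 0 = 0}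

/-- The `i`-th standard unit vector. -/
def unitVec (F : Type*) [Field F] [LinearOrder F] [IsStrictOrderedRing F] {d : ℕ} (i : Fin d) : Fin d → F :=
  Pi.single i 1

open Matrix

section Similarity

variable {K V : Type*} [Field K] [AddCommGroup V] [Module K V]

theorem _root_.LinearMap.BilinForm.IsSymm.map_map_eq_smul_of_map_self [NeZero (2 : K)]
    {B : LinearMap.BilinForm K V} (hB : B.IsSymm) {L : V →ₗ[K] V} {a : K}
    (h : ∀ v, B (L v) (L v) = a * B v v) (u v : V) : B (L u) (L v) = a * B u v :=
  LinearMap.congr_fun₂ (LinearMap.BilinForm.ext_of_isSymm (B := B.compl₁₂ L L) (C := a • B)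
    ⟨fun x y => hB.eq (L x) (L y)⟩ (hB.smul a) h) u v

theorem _root_.LinearMap.BilinForm.ne_zero_of_map_map_eq_smul {B : LinearMap.BilinForm K V}
    (hB : B ≠ 0) {L : V ≃ₗ[K] V} {a : K} (h : ∀ u v, B (L u) (L v) = a * B u v) :
    a ≠ 0 := by
  rintro rfl
  refine hB (LinearMap.ext₂ fun u v => ?_)
  simpa using h (L.symm u) (L.symm v)

theorem _root_.LinearMap.BilinForm.map_orthogonal_of_map_map_eq_smul
    {B : LinearMap.BilinForm K V} {L : V ≃ₗ[K] V} {a : K} (ha : a ≠ 0)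
    (h : ∀ u v, B (L u) (L v) = a * B u v) (W : Submodule K V) :
    (B.orthogonal W).map (L : V →ₗ[K] V) = B.orthogonal (W.map (L : V →ₗ[K] V)) := by
  ext x
  have hx (n : V) : B (L n) x = a * B n (L.symm x) := by rw [← h, L.apply_symm_apply]
  rw [Submodule.mem_map_equiv]
  simp only [LinearMap.BilinForm.mem_orthogonal_iff, Submodule.mem_map, forall_exists_index,
    and_imp, forall_apply_eq_imp_iff₂, LinearEquiv.coe_coe, hx, mul_eq_zero, ha, false_or]

theorem _root_.Submodule.map_equiv_eq_of_map_le [FiniteDimensional K V] (L : V ≃ₗ[K] V)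
    {W : Submodule K V} (h : W.map (L : V →ₗ[K] V) ≤ W) : W.map (L : V →ₗ[K] V) = W :=
  Submodule.eq_of_le_of_finrank_eq h (L.finrank_map_eq W)

theorem _root_.LinearMap.BilinForm.tfae_map_le_self_of_orthogonal_eq [FiniteDimensional K V]
    {B : LinearMap.BilinForm K V} {L : V ≃ₗ[K] V} {a : K} (ha : a ≠ 0)
    (h : ∀ u v, B (L u) (L v) = a * B u v) {S T : Submodule K V}
    (hS : B.orthogonal T = S) (hT : B.orthogonal S = T) :
    List.TFAE [S.map (L : V →ₗ[K] V) ≤ S, S.map (L : V →ₗ[K] V) = S,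
      T.map (L : V →ₗ[K] V) ≤ T, T.map (L : V →ₗ[K] V) = T] := by
  have hmap := B.map_orthogonal_of_map_map_eq_smul ha h
  tfae_have 1 → 2 := Submodule.map_equiv_eq_of_map_le L
  tfae_have 2 → 1 := Eq.le
  tfae_have 3 → 4 := Submodule.map_equiv_eq_of_map_le L
  tfae_have 4 → 3 := Eq.le
  tfae_have 2 → 4 := fun hLS => by rw [← hT, hmap, hLS]
  tfae_have 4 → 2 := fun hLT => by rw [← hS, hmap, hLT]
  tfae_finish

end Similarity

section Diagonal

variable {K ι : Type*} [Field K] [Fintype ι] [DecidableEq ι]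

theorem _root_.Matrix.toBilin'_diagonal_apply (η x y : ι → K) :
    toBilin' (diagonal η) x y = ∑ i, x i * η i * y i := by
  simp [toBilin'_apply', dotProduct, mulVec_diagonal, mul_assoc]

theorem _root_.Matrix.toBilin'_diagonal_ne_zero [Nonempty ι] {η : ι → K}
    (hη : ∀ i, η i ≠ 0) :
    toBilin' (diagonal η) ≠ 0 := fun h => by
  obtain ⟨i⟩ := ‹Nonempty ι›
  have hii := toBilin'_single (diagonal η) i i
  rw [h, diagonal_apply_eq] at hii
  exact hη i hii.symm

theorem _root_.Matrix.orthogonal_toBilin'_diagonal_pi_bot {η : ι → K} (hη : ∀ i, η i ≠ 0)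
    (I : Set ι) :
    (toBilin' (diagonal η)).orthogonal (Submodule.pi I fun _ => ⊥) =
      Submodule.pi Iᶜ fun _ => ⊥ := by
  ext v
  simp only [LinearMap.BilinForm.mem_orthogonal_iff, Submodule.mem_pi, Submodule.mem_bot,
    Set.mem_compl_iff, toBilin'_diagonal_apply]
  constructor
  · intro hv i hi
    have := hv (Pi.single i 1) fun j hj => Pi.single_eq_of_ne (ne_of_mem_of_not_mem hj hi) 1
    simpa [Pi.single_apply, hη i] using this
  · intro hv t ht
    refine Finset.sum_eq_zero fun i _ => ?_
    by_cases hi : i ∈ I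
    · simp [ht i hi]
    · simp [hv i hi]

end Diagonal

section Products

variable {K : Type*} [Field K] {n : ℕ}

def minkSignature [NeZero n] : Fin n → K := fun i => if i = 0 then 1 else -1

theorem minkSignature_ne_zero [NeZero n] (i : Fin n) : minkSignature (K := K) i ≠ 0 := by
  unfold minkSignature
  split_ifs <;> norm_num

theorem euclProd_eq_toBilin' :
    (euclProd : (Fin n → K) → (Fin n → K) → K) = fun p q => toBilin' (diagonal 1) p q := by
  funext p q
  rw [toBilin'_diagonal_apply]
  simp [euclProd]

theorem minkProd_eq_toBilin' [NeZero n] :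
    (minkProd : (Fin n → K) → (Fin n → K) → K) =
      fun p q => toBilin' (diagonal minkSignature) p q := by
  funext p q
  rw [toBilin'_diagonal_apply, ← Finset.add_sum_erase _ _ (Finset.mem_univ 0), minkProd,
    sub_eq_add_neg, ← Finset.sum_neg_distrib]
  congr 1
  · simp [minkSignature]
  · exact Finset.sum_congr rfl fun i hi => by simp [minkSignature, Finset.ne_of_mem_erase hi]

theorem _root_.LinearMap.BilinForm.IsSymm.map_map_eq_smul_of_sqDist [NeZero (2 : K)]
    {B : LinearMap.BilinForm K (Fin n → K)} (hB : B.IsSymm)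
    {L : (Fin n → K) →ₗ[K] (Fin n → K)} {a : K}
    (h : ∀ p q, sqDist (fun u v => B u v) (L p) (L q) = a * sqDist (fun u v => B u v) p q)
    (u v : Fin n → K) : B (L u) (L v) = a * B u v :=
  hB.map_map_eq_smul_of_map_self (fun v => by simpa [sqDist] using h v 0) u v

end Products

theorem simul0_eq_pi [NeZero d] :
    simul0 F d = (Submodule.pi {0} fun _ => ⊥ : Submodule F (Fin d → F)) := by
  ext
  simp [simul0]

theorem timeAxis_eq_pi [NeZero d] :
    timeAxis F d = (Submodule.pi {0}ᶜ fun _ => ⊥ : Submodule F (Fin d → F)) := by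
  ext
  simp [timeAxis]

theorem preserve_simul0_iff_preserve_timeAxis_general [NeZero d]
    (L : (Fin d → F) ≃ₗ[F] (Fin d → F))
    (hL : EuclSim (⇑L) ∨ PoiSim (⇑L)) :
    List.TFAE [⇑L '' simul0 F d ⊆ simul0 F d,
               ⇑L '' simul0 F d = simul0 F d,
               ⇑L '' timeAxis F d ⊆ timeAxis F d,
               ⇑L '' timeAxis F d = timeAxis F d] := by
  obtain ⟨η, hη, a, hsim⟩ : ∃ η : Fin d → F, (∀ i, η i ≠ 0) ∧ ∃ a : F, ∀ p q,
      sqDist (fun u v => toBilin' (diagonal η) u v) (L p) (L q) =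
        a * sqDist (fun u v => toBilin' (diagonal η) u v) p q := by
    rcases hL with ⟨-, a, h⟩ | ⟨-, a, h⟩
    · exact ⟨1, fun _ => one_ne_zero (α := F), a, by rwa [euclProd_eq_toBilin'] at h⟩
    · exact ⟨minkSignature, minkSignature_ne_zero, a, by rwa [minkProd_eq_toBilin'] at h⟩
  have hB := (isSymm_toBilin'_iff_isSymm.2 (isSymm_diagonal η)).map_map_eq_smul_of_sqDist
    (L := (L : (Fin d → F) →ₗ[F] (Fin d → F))) hsim
  have ha := LinearMap.BilinForm.ne_zero_of_map_map_eq_smul (toBilin'_diagonal_ne_zero hη) hB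
  have hcoe (W : Submodule F (Fin d → F)) :
      ⇑L '' W = W.map (L : (Fin d → F) →ₗ[F] (Fin d → F)) :=
    (W.map_coe _).symm
  rw [simul0_eq_pi, timeAxis_eq_pi]
  simp only [hcoe, SetLike.coe_subset_coe, SetLike.coe_set_eq]
  exact LinearMap.BilinForm.tfae_map_le_self_of_orthogonal_eq ha hB
    (by simpa only [compl_compl] using orthogonal_toBilin'_diagonal_pi_bot hη {0}ᶜ)
    (orthogonal_toBilin'_diagonal_pi_bot hη {0})

/-- for a linear bijection that is a Euclidean or Poincaré
similarity, preserving `S₀` and preserving `T` are all equivalent. -/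
theorem preserve_simul0_iff_preserve_timeAxis [NeZero d] (hd : 2 ≤ d)
    (L : (Fin d → F) ≃ₗ[F] (Fin d → F))
    (hL : EuclSim (⇑L) ∨ PoiSim (⇑L)) :
    List.TFAE [⇑L '' simul0 F d ⊆ simul0 F d,
               ⇑L '' simul0 F d = simul0 F d,
               ⇑L '' timeAxis F d ⊆ timeAxis F d,
               ⇑L '' timeAxis F d = timeAxis F d] :=
  preserve_simul0_iff_preserve_timeAxis_general L hL

end Spacetimes
end

section
/- A Euclidean similarity respects the binary relation S if and only if it respects the binary relation Rest. Hence the set of Euclidean similarities respecting S equals the set of Euclidean similarities respecting Rest, i.e., equals the set of trivial Euclidean similarities. -/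
namespace Spacetimes

open Finset

variable {F : Type*} [Field F] [LinearOrder F] [IsStrictOrderedRing F] {d : ℕ}

/-! The linear part `L` of a Euclidean similarity scales the dot product by a constant, hence
preserves orthogonality. Both relations are translation invariant, so `A` respects `S` iff `L`
maps the hyperplane `x₀ = 0` onto itself, and respects `Rest` iff `L` maps the time axis onto
itself. These two subspaces are each other's orthogonal complements, and a bijection preserving
orthogonality preserves a set as soon as it preserves the set whose complement it is. -/

section Orthogonality

variable {ι R : Type*} [Fintype ι] [DecidableEq ι] [Semiring R]

theorem apply_eq_zero_iff_forall_dotProduct_eq_zero (v : ι → R) (j : ι) :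
    v j = 0 ↔ ∀ w : ι → R, (∀ i ≠ j, w i = 0) → v ⬝ᵥ w = 0 := by
  refine ⟨fun hv w hw => Finset.sum_eq_zero fun i _ => ?_, fun h => ?_⟩
  · by_cases hi : i = j
    · rw [hi, hv, zero_mul]
    · rw [hw i hi, mul_zero]
  · simpa using h (Pi.single j 1) fun i hi => Pi.single_eq_of_ne hi 1

theorem forall_ne_apply_eq_zero_iff_forall_dotProduct_eq_zero (v : ι → R) (j : ι) :
    (∀ i ≠ j, v i = 0) ↔ ∀ w : ι → R, w j = 0 → v ⬝ᵥ w = 0 := by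
  refine ⟨fun hv w hw => Finset.sum_eq_zero fun i _ => ?_, fun h i hi => ?_⟩
  · by_cases hi : i = j
    · rw [hi, hw, mul_zero]
    · rw [hv i hi, zero_mul]
  · simpa using h (Pi.single i 1) (Pi.single_eq_of_ne hi.symm 1)

end Orthogonality

theorem preserves_complement_of_preserves {α : Type*} (L : α ≃ α) {orth : α → α → Prop}
    (hL : ∀ v w, orth v w ↔ orth (L v) (L w)) {X Y : α → Prop}
    (hXY : ∀ v, X v ↔ ∀ w, Y w → orth v w) (hY : ∀ v, Y v ↔ Y (L v)) (v : α) :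
    X v ↔ X (L v) := by
  rw [hXY, hXY, L.forall_congr_left]
  refine forall_congr' fun w => ?_
  rw [hY (L.symm w), hL, L.apply_symm_apply]

theorem respects2_iff_of_affine {M G : Type*} [AddCommGroup M] [FunLike G M M]
    [AddMonoidHomClass G M M] {A : M → M} {L : G} {t : M} (hA : ∀ p, A p = L p + t)
    {R : M → M → Prop} {P : M → Prop} (hR : ∀ p q, R p q ↔ P (p - q)) :
    Respects2 A R ↔ ∀ v, P v ↔ P (L v) := by
  have hAsub : ∀ p q, A p - A q = L (p - q) := fun p q => by
    rw [hA, hA, map_sub, add_sub_add_right_eq_sub]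
  refine ⟨fun h v => ?_, fun h p q => ?_⟩
  · simpa [hR, hAsub] using h v 0
  · rw [hR, hR, hAsub, h]

theorem EuclSim.exists_affine_orthogonality_iff {A : (Fin d → F) → (Fin d → F)}
    (hA : EuclSim A) : ∃ (L : (Fin d → F) ≃ₗ[F] (Fin d → F)) (t : Fin d → F),
      (∀ p, A p = L p + t) ∧ ∀ v w, v ⬝ᵥ w = 0 ↔ L v ⬝ᵥ L w = 0 := by
  obtain ⟨⟨L, t, hAff⟩, a, ha⟩ := hA
  have hQ : ∀ v, L v ⬝ᵥ L v = a * (v ⬝ᵥ v) := fun v => by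
    simpa [sqDist, euclProd, dotProduct, hAff] using ha v 0
  have hB : ∀ v w, L v ⬝ᵥ L w = a * (v ⬝ᵥ w) := fun v w => by
    have h := hQ (v + w)
    simp only [map_add, add_dotProduct, dotProduct_add, dotProduct_comm w,
      dotProduct_comm (L w)] at h
    linear_combination (h - hQ v - hQ w) / 2
  refine ⟨L, t, hAff, fun v w => ?_⟩
  rcases eq_or_ne a 0 with rfl | ha0
  · -- with scale factor `0`, `L` kills every vector, so the space is trivial
    have hzero : ∀ u : Fin d → F, u = 0 := fun u =>
      L.injective (by simpa using dotProduct_self_eq_zero.mp ((hQ u).trans (zero_mul _)))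
    simp [hzero v]
  · rw [hB, mul_eq_zero, or_iff_right ha0]

theorem simRel_iff_sub {G : Type*} [AddGroup G] [NeZero d] (p q : Fin d → G) :
    SimRel p q ↔ (p - q) 0 = 0 :=
  sub_eq_zero.symm

theorem restRel_iff_sub {G : Type*} [AddGroup G] [NeZero d] (p q : Fin d → G) :
    RestRel p q ↔ ∀ i ≠ 0, (p - q) i = 0 :=
  forall₂_congr fun _ _ => sub_eq_zero.symm

theorem euclSim_respects_S_iff_respects_Rest_general [NeZero d] :
    (∀ A : (Fin d → F) → (Fin d → F), EuclSim A →
      (Respects2 A SimRel ↔ Respects2 A RestRel)) ∧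
    {A : (Fin d → F) → (Fin d → F) | EuclSim A ∧ Respects2 A SimRel}
      = {A | TrivEuclSim A} := by
  have key : ∀ A : (Fin d → F) → (Fin d → F), EuclSim A →
      (Respects2 A SimRel ↔ Respects2 A RestRel) := by
    intro A hA
    obtain ⟨L, t, hAff, hL⟩ := hA.exists_affine_orthogonality_iff
    rw [respects2_iff_of_affine hAff (P := fun v => v 0 = 0) simRel_iff_sub,
      respects2_iff_of_affine hAff (P := fun v => ∀ i ≠ 0, v i = 0) restRel_iff_sub]
    exact ⟨preserves_complement_of_preserves L.toEquiv hL
        fun v => forall_ne_apply_eq_zero_iff_forall_dotProduct_eq_zero v 0,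
      preserves_complement_of_preserves L.toEquiv hL
        fun v => apply_eq_zero_iff_forall_dotProduct_eq_zero v 0⟩
  exact ⟨key, Set.ext fun A => and_congr_right (key A)⟩

/-- a Euclidean similarity respects `S` iff it respects `Rest`;
hence the Euclidean similarities respecting `S` are exactly the trivial
Euclidean similarities. -/
theorem euclSim_respects_S_iff_respects_Rest [NeZero d] (hd : 2 ≤ d) :
    (∀ A : (Fin d → F) → (Fin d → F), EuclSim A →
      (Respects2 A SimRel ↔ Respects2 A RestRel)) ∧
    {A : (Fin d → F) → (Fin d → F) | EuclSim A ∧ Respects2 A SimRel}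
      = {A | TrivEuclSim A} :=
  euclSim_respects_S_iff_respects_Rest_general

end Spacetimes
end

section
/- If d > 2, then a map A : F^d → F^d is both a Euclidean similarity and a Poincaré similarity if and only if A is a trivial Euclidean similarity. -/
namespace Spacetimes

open Finset

variable {F : Type*} [Field F] [LinearOrder F] [IsStrictOrderedRing F] {d : ℕ}

/-!
Write the squared Euclidean and Minkowski norms of `v` as `t² + s` and `t² - s`, where `t = v 0`
and `s = spatialSq v`. For a linear map `L` scaling `t² + s` by `a`, scaling `t² - s`, `s`, or
`t²` by the same `a` are equivalent. If `L` scales `t² - s` by some `b`, then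
`2 (L v 0)² = (a - b) |v|²` for spatial `v`; since `v ↦ L v 0` is linear, evaluating this at two
orthogonal spatial unit vectors and at their sum (possible only for `d > 2`) forces `a = b`.
Then `s` scales by `a ≠ 0`, so `L` preserves being at rest, i.e. `s (p - q) = 0`.
Conversely, if `L` preserves rest it maps the time axis into itself, so by polarization
`L v 0` is proportional to `v 0` and `t²` scales by `a`.
-/

omit [LinearOrder F] [IsStrictOrderedRing F] in
theorem euclProd_eq_dotProduct (p q : Fin d → F) : euclProd p q = p ⬝ᵥ q := rfl

section Affine

variable {A : (Fin d → F) → (Fin d → F)} {L : (Fin d → F) →ₗ[F] (Fin d → F)} {t : Fin d → F}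

omit [LinearOrder F] [IsStrictOrderedRing F] in
theorem sub_eq_of_eq_add_const (hA : ∀ p, A p = L p + t) (p q : Fin d → F) :
    A p - A q = L (p - q) := by
  rw [hA, hA, map_sub, add_sub_add_right_eq_sub]

omit [LinearOrder F] [IsStrictOrderedRing F] in
theorem sqDist_scale_iff (hA : ∀ p, A p = L p + t) {B : (Fin d → F) → (Fin d → F) → F}
    {a : F} :
    (∀ p q, sqDist B (A p) (A q) = a * sqDist B p q) ↔ ∀ v, B (L v) (L v) = a * B v v := by
  refine ⟨fun h v => ?_, fun h p q => ?_⟩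
  · simpa [sqDist, sub_eq_of_eq_add_const hA] using h v 0
  · rw [sqDist, sqDist, sub_eq_of_eq_add_const hA, h]

end Affine

section Spacetime

variable [NeZero d]

def spatialSq (v : Fin d → F) : F := ∑ i ∈ univ.erase 0, v i ^ 2

omit [LinearOrder F] [IsStrictOrderedRing F] in
theorem euclProd_self_eq (v : Fin d → F) : euclProd v v = v 0 ^ 2 + spatialSq v := by
  rw [euclProd, spatialSq, ← add_sum_erase _ _ (mem_univ 0)]
  simp only [sq]

omit [LinearOrder F] [IsStrictOrderedRing F] in
theorem minkProd_self_eq (v : Fin d → F) : minkProd v v = v 0 ^ 2 - spatialSq v := by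
  simp only [minkProd, spatialSq, sq]

theorem spatialSq_eq_zero_iff {v : Fin d → F} : spatialSq v = 0 ↔ v ∈ timeAxis F d := by
  rw [spatialSq, sum_eq_zero_iff_of_nonneg fun i _ => sq_nonneg (v i)]
  simp [timeAxis]

theorem restRel_iff_sub_mem_timeAxis {p q : Fin d → F} : RestRel p q ↔ p - q ∈ timeAxis F d := by
  simp [RestRel, timeAxis, sub_eq_zero]

theorem unitVec_zero_mem_timeAxis : unitVec F (0 : Fin d) ∈ timeAxis F d := by
  intro i hi
  simp [unitVec, hi]

end Spacetime

section Scaling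

variable {L : (Fin d → F) →ₗ[F] (Fin d → F)} {a : F}

theorem euclProd_map_map (hE : ∀ v, euclProd (L v) (L v) = a * euclProd v v)
    (u v : Fin d → F) : euclProd (L u) (L v) = a * euclProd u v := by
  have h := hE (u + v)
  simp only [map_add, euclProd_eq_dotProduct, add_dotProduct, dotProduct_add,
    dotProduct_comm v u, dotProduct_comm (L v) (L u)] at h hE ⊢
  linear_combination (h - hE u - hE v) / 2

variable [NeZero d]

omit [LinearOrder F] [IsStrictOrderedRing F] in
theorem scale_ne_zero_of_surjective (hL : Function.Surjective L)
    (hE : ∀ v, euclProd (L v) (L v) = a * euclProd v v) : a ≠ 0 := by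
  rintro rfl
  obtain ⟨v, hv⟩ := hL (Pi.single 0 1)
  simpa [hv, euclProd_eq_dotProduct] using hE v

theorem minkProd_scale_iff (hE : ∀ v, euclProd (L v) (L v) = a * euclProd v v) :
    (∀ v, minkProd (L v) (L v) = a * minkProd v v) ↔ ∀ v, L v 0 ^ 2 = a * v 0 ^ 2 := by
  refine forall_congr' fun v => ?_
  have key : minkProd (L v) (L v) - a * minkProd v v = 2 * (L v 0 ^ 2 - a * v 0 ^ 2) := by
    rw [minkProd_self_eq, minkProd_self_eq]
    linear_combination euclProd_self_eq (L v) - a * euclProd_self_eq v - hE v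
  rw [← sub_eq_zero, key, mul_eq_zero, sub_eq_zero, or_iff_right two_ne_zero]

omit [LinearOrder F] [IsStrictOrderedRing F] in
theorem spatialSq_scale_iff (hE : ∀ v, euclProd (L v) (L v) = a * euclProd v v) :
    (∀ v, spatialSq (L v) = a * spatialSq v) ↔ ∀ v, L v 0 ^ 2 = a * v 0 ^ 2 := by
  refine forall_congr' fun v => ?_
  have key : spatialSq (L v) - a * spatialSq v = -(L v 0 ^ 2 - a * v 0 ^ 2) := by
    linear_combination a * euclProd_self_eq v - euclProd_self_eq (L v) + hE v
  rw [← sub_eq_zero, key, neg_eq_zero, sub_eq_zero]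

omit [LinearOrder F] [IsStrictOrderedRing F] in
theorem two_mul_apply_zero_sq_of_scale {b : F}
    (hE : ∀ v, euclProd (L v) (L v) = a * euclProd v v)
    (hM : ∀ v, minkProd (L v) (L v) = b * minkProd v v) {v : Fin d → F} (hv : v 0 = 0) :
    2 * L v 0 ^ 2 = (a - b) * euclProd v v := by
  have hE' := euclProd_self_eq v
  have hM' := minkProd_self_eq v
  rw [hv] at hE' hM'
  linear_combination hE v + hM v - euclProd_self_eq (L v) - minkProd_self_eq (L v)
    + b * (hM' + hE')

theorem scale_eq_of_scale_euclProd_minkProd (hd : 2 < d) {b : F}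
    (hE : ∀ v, euclProd (L v) (L v) = a * euclProd v v)
    (hM : ∀ v, minkProd (L v) (L v) = b * minkProd v v) : a = b := by
  let i : Fin d := ⟨1, by omega⟩
  let j : Fin d := ⟨2, by omega⟩
  have hi : i ≠ 0 := by simp [i, Fin.ext_iff]
  have hj : j ≠ 0 := by simp [j, Fin.ext_iff]
  have hij : i ≠ j := by simp [i, j, Fin.ext_iff]
  have h_i := two_mul_apply_zero_sq_of_scale hE hM (v := Pi.single i 1) (by simp [hi.symm])
  have h_j := two_mul_apply_zero_sq_of_scale hE hM (v := Pi.single j 1) (by simp [hj.symm])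
  have h_ij := two_mul_apply_zero_sq_of_scale hE hM
    (v := Pi.single i 1 + Pi.single j 1) (by simp [hi.symm, hj.symm])
  simp only [euclProd_eq_dotProduct, add_dotProduct, dotProduct_add, single_dotProduct,
    Pi.single_apply, hij, hij.symm, map_add, Pi.add_apply, if_true, if_false,
    mul_one] at h_i h_j h_ij
  set x := L (Pi.single i 1) 0
  set y := L (Pi.single j 1) 0
  have hxy : x * y = 0 := by linear_combination (h_ij - h_i - h_j) / 4
  -- `(a - b) ^ 2 = (2 * x ^ 2) * (2 * y ^ 2) = 4 * (x * y) ^ 2`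
  have hsq : (a - b) ^ 2 = 0 := by
    linear_combination -2 * y ^ 2 * h_i - (a - b) * h_j + 4 * x * y * hxy
  exact sub_eq_zero.1 (pow_eq_zero_iff two_ne_zero |>.1 hsq)

theorem apply_zero_sq_of_mem_timeAxis (hE : ∀ v, euclProd (L v) (L v) = a * euclProd v v)
    (ha : a ≠ 0) (h0 : L (unitVec F 0) ∈ timeAxis F d) (v : Fin d → F) :
    L v 0 ^ 2 = a * v 0 ^ 2 := by
  obtain ⟨l, hLe⟩ : ∃ l, L (unitVec F 0) = Pi.single 0 l := by
    refine ⟨L (unitVec F 0) 0, funext fun i => ?_⟩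
    rcases eq_or_ne i 0 with rfl | hi
    · simp
    · simp [h0 i hi, hi]
  have hpol : ∀ w, l * L w 0 = a * w 0 := fun w => by
    have h := euclProd_map_map hE (unitVec F 0) w
    rw [hLe] at h
    simpa [unitVec, euclProd_eq_dotProduct] using h
  have hl : l * l = a := by
    have h := hpol (unitVec F 0)
    rw [hLe] at h
    simpa [unitVec] using h
  refine mul_left_cancel₀ ha ?_
  linear_combination -(L v 0 ^ 2) * hl + (l * L v 0 + a * v 0) * hpol v

end Scaling

/-- if `d > 2`, then the maps that are both Euclidean and
Poincaré similarities are exactly the trivial Euclidean similarities. -/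
theorem euclSim_and_poiSim_iff_trivEuclSim [NeZero d] (hd : 2 < d)
    (A : (Fin d → F) → (Fin d → F)) :
    (EuclSim A ∧ PoiSim A) ↔ TrivEuclSim A := by
  constructor
  · rintro ⟨⟨⟨L, t, hA⟩, a, ha⟩, -, b, hb⟩
    have hA' : ∀ p, A p = L.toLinearMap p + t := hA
    have hE := (sqDist_scale_iff hA').1 ha
    have hM := (sqDist_scale_iff hA').1 hb
    obtain rfl := scale_eq_of_scale_euclProd_minkProd hd hE hM
    have hS := (spatialSq_scale_iff hE).2 ((minkProd_scale_iff hE).1 hM)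
    have ha0 := scale_ne_zero_of_surjective L.surjective hE
    refine ⟨⟨⟨L, t, hA⟩, a, ha⟩, fun p q => ?_⟩
    simp only [restRel_iff_sub_mem_timeAxis, sub_eq_of_eq_add_const hA',
      ← spatialSq_eq_zero_iff, hS, mul_eq_zero, ha0, false_or]
  · rintro ⟨⟨⟨L, t, hA⟩, a, ha⟩, hR⟩
    have hA' : ∀ p, A p = L.toLinearMap p + t := hA
    have hE := (sqDist_scale_iff hA').1 ha
    have hrest : RestRel (unitVec F (0 : Fin d)) 0 :=
      restRel_iff_sub_mem_timeAxis.2 (by simpa using unitVec_zero_mem_timeAxis)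
    have h0 : L (unitVec F 0) ∈ timeAxis F d := by
      simpa [restRel_iff_sub_mem_timeAxis, sub_eq_of_eq_add_const hA'] using (hR _ _).1 hrest
    have hT := apply_zero_sq_of_mem_timeAxis hE (scale_ne_zero_of_surjective L.surjective hE) h0
    exact ⟨⟨⟨L, t, hA⟩, a, ha⟩, ⟨L, t, hA⟩, a,
      (sqDist_scale_iff hA').2 ((minkProd_scale_iff hE).2 hT)⟩

end Spacetimes
end

section
/- Every Galilean similarity respects the binary relation S, i.e., for every Galilean similarity A and all p, q ∈ F^d, p₁ = q₁ if and only if A(p)₁ = A(q)₁. -/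
namespace Spacetimes

open Finset

variable {F : Type*} [Field F] [LinearOrder F] [IsStrictOrderedRing F] {d : ℕ}

/-! The linear part of a Galilean similarity maps the hyperplane `p 0 = 0` into itself, so the
time coordinate of `A p` is `p 0 * c + t` for constants `c, t`; `c` is a unit because `A` is onto,
hence `A p 0` determines `p 0`. -/

section LinearCoordinate

variable {R ι : Type*} [CommRing R] [DecidableEq ι]

theorem linearMap_apply_coord_eq_mul (L : (ι → R) →ₗ[R] (ι → R)) {i : ι}
    (hL : ∀ w : ι → R, w i = 0 → L w i = 0) (v : ι → R) :
    L v i = v i * L (Pi.single i 1) i := by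
  have hw : L (v - v i • Pi.single i 1) i = 0 := hL _ (by simp)
  rw [map_sub, map_smul, Pi.sub_apply, Pi.smul_apply, smul_eq_mul, sub_eq_zero] at hw
  exact hw

theorem isUnit_linearMap_single_coord (L : (ι → R) →ₗ[R] (ι → R)) (hsurj : Function.Surjective L)
    {i : ι} (hL : ∀ w : ι → R, w i = 0 → L w i = 0) :
    IsUnit (L (Pi.single i 1) i) := by
  obtain ⟨v, hv⟩ := hsurj (Pi.single i 1)
  have h := linearMap_apply_coord_eq_mul L hL v
  rw [hv, Pi.single_eq_same] at h
  exact .of_mul_eq_one_right _ h.symm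

end LinearCoordinate

theorem IsAffine.exists_coord_eq_mul_add {A : (Fin d → F) → (Fin d → F)} (hA : IsAffine A)
    {i : Fin d} (hS : ∀ p q : Fin d → F, p i = q i → A p i = A q i) :
    ∃ c t : F, IsUnit c ∧ ∀ p, A p i = p i * c + t := by
  obtain ⟨L, t, hAL⟩ := hA
  have hL : ∀ w : Fin d → F, w i = 0 → L w i = 0 := fun w hw ↦ by
    simpa [hAL] using hS w 0 (by simpa using hw)
  exact ⟨_, t i, isUnit_linearMap_single_coord L.toLinearMap L.surjective hL,
    fun p ↦ by rw [hAL, Pi.add_apply, ← linearMap_apply_coord_eq_mul L.toLinearMap hL p]; rfl⟩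

theorem galSim_respects_S_general [NeZero d]
    (A : (Fin d → F) → (Fin d → F)) (hA : GalSim A) :
    ∀ p q : Fin d → F, p 0 = q 0 ↔ A p 0 = A q 0 := by
  obtain ⟨hAff, _, hSim⟩ := hA
  obtain ⟨c, t, hc, hAc⟩ := hAff.exists_coord_eq_mul_add fun p q h ↦ (hSim p q h).1
  intro p q
  rw [hAc, hAc, add_left_inj, hc.mul_left_inj]

/-- every Galilean similarity respects the relation `S`. -/
theorem galSim_respects_S [NeZero d] (hd : 2 ≤ d)
    (A : (Fin d → F) → (Fin d → F)) (hA : GalSim A) :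
    ∀ p q : Fin d → F, p 0 = q 0 ↔ A p 0 = A q 0 :=
  galSim_respects_S_general A hA

end Spacetimes
end

section
/- An affine transformation A : F^d → F^d respects both the Euclidean congruence relation ≡ and the betweenness relation Bw if and only if A is a Euclidean similarity. (That is, the affine automorphisms of Euclidean geometry ⟨F^d, ≡, Bw⟩ are exactly the Euclidean similarities.) -/
/-!
If the linear part `L` of `A` preserves congruence, then `L` maps the standard basis to vectors of a
common squared length `a`, and they are pairwise orthogonal since `eᵢ + eⱼ` and `eᵢ - eⱼ` have equal
lengths; by bilinearity `L` then scales every scalar product by `a`. Conversely, an affine bijection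
commutes with the combinations `p + l • (r - p)` and so respects betweenness, while scaling all
squared distances by the same factor respects congruence.
-/

namespace Spacetimes

open Finset

variable {F : Type*} [Field F] [LinearOrder F] [IsStrictOrderedRing F] {d : ℕ}

open Function Matrix

section DotProduct

variable {ι R : Type*} [Fintype ι] [DecidableEq ι]

theorem dotProduct_map_eq_mul_of_single [CommRing R] (L : (ι → R) →ₗ[R] (ι → R)) {a : R}
    (hL : ∀ i j, L (Pi.single i 1) ⬝ᵥ L (Pi.single j 1) = a * (Pi.single i 1 ⬝ᵥ Pi.single j 1))
    (v w : ι → R) : L v ⬝ᵥ L w = a * (v ⬝ᵥ w) := by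
  have hform : (dotProductBilin R R).compl₁₂ L L = a • dotProductBilin R R :=
    LinearMap.ext_basis (Pi.basisFun R ι) (Pi.basisFun R ι) fun i j => by simpa using hL i j
  exact LinearMap.congr_fun₂ hform v w

theorem exists_dotProduct_map_eq_mul [Field R] [CharZero R] (L : (ι → R) →ₗ[R] (ι → R))
    (hL : ∀ v w, v ⬝ᵥ v = w ⬝ᵥ w → L v ⬝ᵥ L v = L w ⬝ᵥ L w) :
    ∃ a : R, ∀ v w, L v ⬝ᵥ L w = a * (v ⬝ᵥ w) := by
  rcases isEmpty_or_nonempty ι with _ | ⟨⟨i₀⟩⟩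
  · exact ⟨0, fun v w => by simp [dotProduct]⟩
  refine ⟨L (Pi.single i₀ 1) ⬝ᵥ L (Pi.single i₀ 1), dotProduct_map_eq_mul_of_single L ?_⟩
  intro i j
  rcases eq_or_ne i j with rfl | hij
  · simpa using hL (Pi.single i 1) (Pi.single i₀ 1) (by simp)
  · have hpolar := hL (Pi.single i 1 + Pi.single j 1) (Pi.single i 1 - Pi.single j 1)
      (by simp [hij, hij.symm])
    simp only [map_add, map_sub, add_dotProduct, dotProduct_add, sub_dotProduct,
      dotProduct_sub, dotProduct_comm (L (Pi.single j 1))] at hpolar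
    simp only [single_dotProduct, Pi.single_eq_of_ne hij, mul_zero]
    linear_combination hpolar / 4

end DotProduct

omit [LinearOrder F] [IsStrictOrderedRing F] in
theorem sqDist_euclProd (p q : Fin d → F) : sqDist euclProd p q = (p - q) ⬝ᵥ (p - q) := rfl

section Affine

variable {A : (Fin d → F) → (Fin d → F)}

omit [LinearOrder F] [IsStrictOrderedRing F] in
theorem sqDist_euclProd_of_eq_add {L : (Fin d → F) →ₗ[F] (Fin d → F)} {t : Fin d → F}
    (hA : ∀ p, A p = L p + t) (p q : Fin d → F) :
    sqDist euclProd (A p) (A q) = L (p - q) ⬝ᵥ L (p - q) := by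
  rw [sqDist_euclProd, hA, hA, add_sub_add_right_eq_sub, map_sub]

theorem IsAffine.injective (hA : IsAffine A) : Injective A := by
  obtain ⟨L, t, hL⟩ := hA
  exact fun p q h => L.injective (add_right_cancel (by rwa [hL, hL] at h))

theorem IsAffine.respects3_bw (hA : IsAffine A) : Respects3 A Bw := by
  intro p q r
  refine exists_congr fun l => and_congr_right' (and_congr_right' ?_)
  have hinj := hA.injective
  obtain ⟨L, t, hL⟩ := hA
  have hcomb : A (p + l • (r - p)) = A p + l • (A r - A p) := by
    simp only [hL, map_add, map_smul, map_sub]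
    module
  rw [← hcomb, hinj.eq_iff]

/-- For `a = 0` the injectivity of `A` forces the space to be a single point. -/
theorem respects4_congE_of_sqDist_eq_mul (hA : Injective A) {a : F}
    (ha : ∀ p q, sqDist euclProd (A p) (A q) = a * sqDist euclProd p q) :
    Respects4 A CongE := by
  intro p q r s
  rw [CongE, CongE, ha, ha]
  rcases eq_or_ne a 0 with rfl | ha0
  · have hpt : ∀ p q : Fin d → F, p = q := fun p q =>
      hA (sub_eq_zero.1 (dotProduct_self_eq_zero.1 (by simpa [sqDist_euclProd] using ha p q)))
    simp [hpt q p, hpt s r, sqDist_euclProd]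
  · exact (mul_right_inj' ha0).symm

end Affine

theorem affAut_eucl_eq_euclSim_general
    (A : (Fin d → F) → (Fin d → F)) (hA : IsAffine A) :
    (Respects4 A CongE ∧ Respects3 A Bw) ↔ EuclSim A := by
  constructor
  · rintro ⟨hcong, -⟩
    obtain ⟨L, t, hL⟩ := hA
    have hdist := sqDist_euclProd_of_eq_add (L := L.toLinearMap) hL
    obtain ⟨a, ha⟩ := exists_dotProduct_map_eq_mul L.toLinearMap fun v w hvw => by
      simpa [CongE, hdist] using (hcong v 0 w 0).1 (by simpa [CongE, sqDist_euclProd] using hvw)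
    exact ⟨⟨L, t, hL⟩, a, fun p q => by rw [hdist, ha, sqDist_euclProd]⟩
  · rintro ⟨-, a, ha⟩
    exact ⟨respects4_congE_of_sqDist_eq_mul hA.injective ha, hA.respects3_bw⟩

/-- the affine automorphisms of Euclidean geometry
`⟨F^d, ≡, Bw⟩` are exactly the Euclidean similarities. -/
theorem affAut_eucl_eq_euclSim (hd : 2 ≤ d)
    (A : (Fin d → F) → (Fin d → F)) (hA : IsAffine A) :
    (Respects4 A CongE ∧ Respects3 A Bw) ↔ EuclSim A :=
  affAut_eucl_eq_euclSim_general A hA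

end Spacetimes
end

section
/- The square-factor a of any Euclidean similarity satisfies a > 0. The square-factor a of any Poincaré similarity satisfies a ≠ 0; moreover, if d > 2, then the square-factor of any Poincaré similarity satisfies a > 0. -/
/-!
Writing a similarity as `p ↦ L p + t`, its square-factor `a` satisfies `Q (L v) = a * Q v` for
the quadratic form `Q` in question. For the Euclidean form both sides are positive at any `v ≠ 0`,
so `a > 0`. For the Minkowski form, evaluating at the preimage of a time-like unit vector gives
`a ≠ 0`. When `d > 2`, the two linear conditions `v 0 = 0` and `(L v) 0 = 0` have a common
nonzero solution `v`; both `v` and `L v` are then nonzero space-like vectors, so `Q (L v)` and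
`Q v` are both negative and again `a > 0`.
-/

namespace Spacetimes

section

variable {F : Type*} [Field F] {d : ℕ}

lemma IsAffine.exists_linearEquiv_scaling (B : (Fin d → F) → (Fin d → F) → F)
    {A : (Fin d → F) → (Fin d → F)} {a : F} (hA : IsAffine A)
    (h : ∀ p q, sqDist B (A p) (A q) = a * sqDist B p q) :
    ∃ L : (Fin d → F) ≃ₗ[F] (Fin d → F), ∀ v, B (L v) (L v) = a * B v v := by
  obtain ⟨L, t, hL⟩ := hA
  refine ⟨L, fun v => ?_⟩
  simpa [sqDist, hL] using h v 0

lemma minkProd_self_add_euclProd_self [NeZero d] (p : Fin d → F) :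
    minkProd p p + euclProd p p = 2 * (p 0 * p 0) := by
  rw [minkProd, euclProd, ← Finset.add_sum_erase _ _ (Finset.mem_univ 0)]
  ring

lemma minkProd_single_zero_self [NeZero d] :
    minkProd (Pi.single (0 : Fin d) (1 : F)) (Pi.single 0 1) = 1 := by
  simp [minkProd, Pi.single_apply, Finset.mem_erase]

lemma exists_ne_zero_apply_zero_eq_zero_of_linearMap [NeZero d] (hd : 2 < d)
    (φ : (Fin d → F) →ₗ[F] F) : ∃ v : Fin d → F, v ≠ 0 ∧ v 0 = 0 ∧ φ v = 0 := by
  have hker : (LinearMap.prod (LinearMap.proj 0) φ).ker ≠ ⊥ :=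
    LinearMap.ker_ne_bot_of_finrank_lt (by simpa [Module.finrank_prod] using hd)
  obtain ⟨v, hv, hv0⟩ := (Submodule.ne_bot_iff _).mp hker
  simp only [LinearMap.ker_prod, Submodule.mem_inf, LinearMap.mem_ker, LinearMap.coe_proj,
    Function.eval] at hv
  exact ⟨v, hv0, hv⟩

lemma poiSim_factor_ne_zero [NeZero d] {A : (Fin d → F) → (Fin d → F)} {a : F}
    (hA : IsAffine A) (h : ∀ p q, sqDist minkProd (A p) (A q) = a * sqDist minkProd p q) :
    a ≠ 0 := by
  obtain ⟨L, hL⟩ := hA.exists_linearEquiv_scaling minkProd h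
  have h1 := hL (L.symm (Pi.single 0 1))
  rw [L.apply_symm_apply, minkProd_single_zero_self] at h1
  exact left_ne_zero_of_mul (h1 ▸ one_ne_zero)

end

variable {F : Type*} [Field F] [LinearOrder F] [IsStrictOrderedRing F] {d : ℕ}

lemma euclProd_self_pos {v : Fin d → F} (hv : v ≠ 0) : 0 < euclProd v v := by
  obtain ⟨i, hi⟩ := Function.ne_iff.mp hv
  exact Finset.sum_pos' (fun j _ => mul_self_nonneg _)
    ⟨i, Finset.mem_univ i, mul_self_pos.mpr hi⟩

lemma minkProd_self_neg_of_apply_zero_eq_zero [NeZero d] {v : Fin d → F} (hv : v ≠ 0)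
    (hv0 : v 0 = 0) : minkProd v v < 0 := by
  have := minkProd_self_add_euclProd_self v
  rw [hv0, mul_zero, mul_zero] at this
  linarith [euclProd_self_pos hv]

lemma euclSim_factor_pos [NeZero d] {A : (Fin d → F) → (Fin d → F)} {a : F} (hA : IsAffine A)
    (h : ∀ p q, sqDist euclProd (A p) (A q) = a * sqDist euclProd p q) : 0 < a := by
  obtain ⟨L, hL⟩ := hA.exists_linearEquiv_scaling euclProd h
  have he : (Pi.single 0 1 : Fin d → F) ≠ 0 := by simp
  have hpos := euclProd_self_pos (L.map_ne_zero_iff.mpr he)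
  rw [hL] at hpos
  exact pos_of_mul_pos_left hpos (euclProd_self_pos he).le

lemma poiSim_factor_pos [NeZero d] (hd : 2 < d) {A : (Fin d → F) → (Fin d → F)} {a : F}
    (hA : IsAffine A) (h : ∀ p q, sqDist minkProd (A p) (A q) = a * sqDist minkProd p q) :
    0 < a := by
  obtain ⟨L, hL⟩ := hA.exists_linearEquiv_scaling minkProd h
  obtain ⟨v, hv, hv0, hLv0⟩ :=
    exists_ne_zero_apply_zero_eq_zero_of_linearMap hd ((LinearMap.proj 0).comp L.toLinearMap)
  have hneg := minkProd_self_neg_of_apply_zero_eq_zero (L.map_ne_zero_iff.mpr hv) hLv0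
  rw [hL] at hneg
  exact pos_of_mul_neg_left hneg (minkProd_self_neg_of_apply_zero_eq_zero hv hv0).le

theorem square_factor_sign_general [NeZero d] :
    (∀ (A : (Fin d → F) → (Fin d → F)) (a : F), IsAffine A →
      (∀ p q : Fin d → F,
        sqDist euclProd (A p) (A q) = a * sqDist euclProd p q) → 0 < a) ∧
    (∀ (A : (Fin d → F) → (Fin d → F)) (a : F), IsAffine A →
      (∀ p q : Fin d → F,
        sqDist minkProd (A p) (A q) = a * sqDist minkProd p q) → a ≠ 0) ∧
    (2 < d → ∀ (A : (Fin d → F) → (Fin d → F)) (a : F), IsAffine A →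
      (∀ p q : Fin d → F,
        sqDist minkProd (A p) (A q) = a * sqDist minkProd p q) → 0 < a) :=
  ⟨fun _ _ hA h => euclSim_factor_pos hA h, fun _ _ hA h => poiSim_factor_ne_zero hA h,
    fun hd _ _ hA h => poiSim_factor_pos hd hA h⟩

/-- the square-factor of a Euclidean similarity is positive;
the square-factor of a Poincaré similarity is non-zero, and positive when
`d > 2`. -/
theorem square_factor_sign [NeZero d] (hd : 2 ≤ d) :
    (∀ (A : (Fin d → F) → (Fin d → F)) (a : F), IsAffine A →
      (∀ p q : Fin d → F,
        sqDist euclProd (A p) (A q) = a * sqDist euclProd p q) → 0 < a) ∧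
    (∀ (A : (Fin d → F) → (Fin d → F)) (a : F), IsAffine A →
      (∀ p q : Fin d → F,
        sqDist minkProd (A p) (A q) = a * sqDist minkProd p q) → a ≠ 0) ∧
    (2 < d → ∀ (A : (Fin d → F) → (Fin d → F)) (a : F), IsAffine A →
      (∀ p q : Fin d → F,
        sqDist minkProd (A p) (A q) = a * sqDist minkProd p q) → 0 < a) :=
  square_factor_sign_general

end Spacetimes
end
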